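/- Let A be a d×n integer matrix such that the only vector in ker(A) with all coordinates nonnegative is 0. Then D(A) equals the intersection, over all minimally distance reducing sets B ⊆ ker(A), of B ∪ (−B); and D^w(A) equals the intersection, over all minimally strongly distance reducing sets B ⊆ ker(A), of B ∪ (−B). -/

import Mathlib

open Pointwise

namespace DistRed

variable {n d : ℕ}

/-- Componentwise positive part `u⁺`. -/
def posP (u : Fin n → ℤ) : Fin n → ℤ := fun i => max (u i) 0

/-- Componentwise negative part `u⁻`. -/
def negP (u : Fin n → ℤ) : Fin n → ℤ := fun i => max (-u i) 0

/-- The 1-norm `‖u‖ = ∑ᵢ |uᵢ|`. -/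
def onorm (u : Fin n → ℤ) : ℤ := ∑ i, |u i|

/-- Componentwise inequality of vectors. -/
def vle (u v : Fin n → ℤ) : Prop := ∀ i, u i ≤ v i

/-- The single move `u` reduces the 1-norm distance of `z = z⁺ - z⁻`. -/
def reducesOne (u z : Fin n → ℤ) : Prop :=
  (vle (posP u) (posP z) ∧ onorm (z - u) < onorm z) ∨
  (vle (negP u) (posP z) ∧ onorm (z + u) < onorm z) ∨
  (vle (posP u) (negP z) ∧ onorm (z + u) < onorm z) ∨
  (vle (negP u) (negP z) ∧ onorm (z - u) < onorm z)

/-- `B` reduces the distance of `z`. -/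
def reduces (B : Set (Fin n → ℤ)) (z : Fin n → ℤ) : Prop := ∃ u ∈ B, reducesOne u z

/-- `B` strongly reduces the distance of `z`. -/
def stronglyReduces (B : Set (Fin n → ℤ)) (z : Fin n → ℤ) : Prop :=
  (∃ u ∈ B, (vle (posP u) (posP z) ∧ onorm (z - u) < onorm z) ∨
            (vle (negP u) (posP z) ∧ onorm (z + u) < onorm z)) ∧
  (∃ u ∈ B, (vle (posP u) (negP z) ∧ onorm (z + u) < onorm z) ∨
            (vle (negP u) (negP z) ∧ onorm (z - u) < onorm z))

/-- `B` is distance reducing relative to the kernel `K`. -/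
def distanceReducing (K B : Set (Fin n → ℤ)) : Prop := ∀ z ∈ K, z ≠ 0 → reduces B z

/-- `B` is strongly distance reducing relative to the kernel `K`. -/
def stronglyDistanceReducing (K B : Set (Fin n → ℤ)) : Prop :=
  ∀ z ∈ K, z ≠ 0 → stronglyReduces B z

/-- The Graver basis: nonzero elements of `K` with no proper conformal decomposition. -/
def graver (K : Set (Fin n → ℤ)) : Set (Fin n → ℤ) :=
  {z | z ∈ K ∧ z ≠ 0 ∧ ¬ ∃ u v, u ∈ K ∧ v ∈ K ∧ u ≠ 0 ∧ v ≠ 0 ∧ z = u + v ∧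
      posP z = posP u + posP v ∧ negP z = negP u + negP v}

/-- `B` connects `x` and `y` through nonnegative points by moves in `B ∪ -B`. -/
def connects (B : Set (Fin n → ℤ)) (x y : Fin n → ℤ) : Prop :=
  ∃ (k : ℕ) (f : Fin (k + 1) → Fin n → ℤ),
    f 0 = x ∧ f (Fin.last k) = y ∧ (∀ i j, 0 ≤ f i j) ∧
    ∀ i : Fin k, f i.succ - f i.castSucc ∈ B ∪ -B

/-- Kernel of an integer matrix. -/
def kerM (A : Matrix (Fin d) (Fin n) ℤ) : Set (Fin n → ℤ) := {u | A.mulVec u = 0}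

/-- Markov basis of a matrix. -/
def isMarkovM (A : Matrix (Fin d) (Fin n) ℤ) (B : Set (Fin n → ℤ)) : Prop :=
  B ⊆ kerM A ∧ ∀ x y : Fin n → ℤ, (∀ j, 0 ≤ x j) → (∀ j, 0 ≤ y j) →
    A.mulVec x = A.mulVec y → connects B x y

def isMinimalMarkovM (A : Matrix (Fin d) (Fin n) ℤ) (B : Set (Fin n → ℤ)) : Prop :=
  isMarkovM A B ∧ ∀ B' ⊂ B, ¬ isMarkovM A B'

/-- Kernel of the 1×n matrix `a`. -/
def kerV (a : Fin n → ℕ) : Set (Fin n → ℤ) := {u | ∑ i, (a i : ℤ) * u i = 0}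

/-- Markov basis of a 1×n matrix. -/
def isMarkov (a : Fin n → ℕ) (B : Set (Fin n → ℤ)) : Prop :=
  B ⊆ kerV a ∧ ∀ x y : Fin n → ℤ, (∀ j, 0 ≤ x j) → (∀ j, 0 ≤ y j) →
    (∑ i, (a i : ℤ) * x i) = (∑ i, (a i : ℤ) * y i) → connects B x y

def isMinimalMarkov (a : Fin n → ℕ) (B : Set (Fin n → ℤ)) : Prop :=
  isMarkov a B ∧ ∀ B' ⊂ B, ¬ isMarkov a B'

/-- The circuit `z_{i,j}` of the 1×n matrix `a`. -/
def circuit (a : Fin n → ℕ) (i j : Fin n) : Fin n → ℤ :=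
  fun k => if k = i then ((a j / Nat.gcd (a i) (a j) : ℕ) : ℤ)
           else if k = j then -((a i / Nat.gcd (a i) (a j) : ℕ) : ℤ) else 0

/-- `B` reduces the distance of all circuits of `a`. -/
def reducesCircuits (a : Fin n → ℕ) (B : Set (Fin n → ℤ)) : Prop :=
  ∀ i j : Fin n, i < j → reduces B (circuit a i j)

/-- `a` admits a gluing of the first kind. -/
def firstKind (a : Fin n → ℕ) : Prop :=
  ∀ k : Fin n, 1 ≤ k.val →
    ∃ lam : Fin n → ℕ, (∀ i, ¬ i < k → lam i = 0) ∧
      Nat.lcm ((Finset.univ.filter (fun i : Fin n => i < k)).gcd a) (a k) = ∑ i, lam i * a i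

/-- Kernel of the submatrix of `a` indexed by `S`, as vectors supported on `S`. -/
def kerOn (a : Fin n → ℕ) (S : Finset (Fin n)) : Set (Fin n → ℤ) :=
  {u | (∀ i, i ∉ S → u i = 0) ∧ ∑ i, (a i : ℤ) * u i = 0}

/-- `a` is glued along the pair of disjoint index sets `(S, T)`. -/
def gluedOn (a : Fin n → ℕ) (S T : Finset (Fin n)) : Prop :=
  ∃ z ∈ kerOn a (S ∪ T), (∀ i, 0 < z i → i ∈ S) ∧ (∀ i, z i < 0 → i ∈ T) ∧
    ∀ w ∈ kerOn a (S ∪ T), ∃! t : (Fin n → ℤ) × (Fin n → ℤ) × ℤ,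
      t.1 ∈ kerOn a S ∧ t.2.1 ∈ kerOn a T ∧ w = t.1 + t.2.1 + t.2.2 • z

/-- Complete intersection on the index set `S` (recursively defined via gluings). -/
inductive IsCIOn (a : Fin n → ℕ) : Finset (Fin n) → Prop
  | single (i : Fin n) : IsCIOn a {i}
  | glue {S T : Finset (Fin n)} (hS : S.Nonempty) (hT : T.Nonempty)
      (hd : Disjoint S T) (hg : gluedOn a S T) (cS : IsCIOn a S) (cT : IsCIOn a T) :
      IsCIOn a (S ∪ T)

/-- `a` is a complete intersection. -/
def isCI (a : Fin n → ℕ) : Prop := IsCIOn a Finset.univ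

/-- Positive distance decomposition. -/
def posDD (K : Set (Fin n → ℤ)) (z : Fin n → ℤ) : Prop :=
  ∃ u v, u ∈ K ∧ v ∈ K ∧ u ≠ 0 ∧ v ≠ 0 ∧ z = u + v ∧ vle (posP u) (posP z) ∧
    onorm v < onorm z

/-- Negative distance decomposition. -/
def negDD (K : Set (Fin n → ℤ)) (z : Fin n → ℤ) : Prop :=
  ∃ u v, u ∈ K ∧ v ∈ K ∧ u ≠ 0 ∧ v ≠ 0 ∧ z = u + v ∧ vle (negP u) (negP z) ∧
    onorm v < onorm z

def Dplus (K : Set (Fin n → ℤ)) : Set (Fin n → ℤ) := {z | z ∈ K ∧ z ≠ 0 ∧ ¬ posDD K z}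

def Dminus (K : Set (Fin n → ℤ)) : Set (Fin n → ℤ) := {z | z ∈ K ∧ z ≠ 0 ∧ ¬ negDD K z}

/-- The distance irreducible elements `D(A)`. -/
def Dboth (K : Set (Fin n → ℤ)) : Set (Fin n → ℤ) := Dplus K ∩ Dminus K

/-- The weakly distance irreducible elements `D^w(A)`. -/
def Dweak (K : Set (Fin n → ℤ)) : Set (Fin n → ℤ) := Dplus K ∪ Dminus K

/-- The indispensable set `S(A)`. -/
def indisp (K : Set (Fin n → ℤ)) : Set (Fin n → ℤ) :=
  {z | z ∈ K ∧ z ≠ 0 ∧ ¬ ∃ u v, u ∈ K ∧ v ∈ K ∧ u ≠ 0 ∧ v ≠ 0 ∧ z = u + v ∧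
      ∀ i, 0 < u i → 0 ≤ v i}

/-- Minimally distance reducing subset of `K`. -/
def minDistRed (K B : Set (Fin n → ℤ)) : Prop :=
  B ⊆ K ∧ distanceReducing K B ∧ ∀ B' ⊂ B, ¬ distanceReducing K B'

/-- Minimally strongly distance reducing subset of `K`. -/
def minStrongDistRed (K B : Set (Fin n → ℤ)) : Prop :=
  B ⊆ K ∧ stronglyDistanceReducing K B ∧ ∀ B' ⊂ B, ¬ stronglyDistanceReducing K B'


/-! ### Auxiliary development for Statement 16 -/

section Statement16Aux

variable {K B C : Set (Fin n → ℤ)} {u v z w p q x g a z₀ : Fin n → ℤ}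

lemma onorm_nonneg' (z : Fin n → ℤ) : 0 ≤ onorm z :=
  Finset.sum_nonneg fun _ _ => abs_nonneg _

lemma onorm_eq_zero' {z : Fin n → ℤ} (h : onorm z = 0) : z = 0 := by
  have h2 := (Finset.sum_eq_zero_iff_of_nonneg (fun i _ => abs_nonneg (z i))).1 h
  funext i
  have := h2 i (Finset.mem_univ i)
  simpa using abs_eq_zero.mp this

lemma onorm_pos (h : z ≠ 0) : 0 < onorm z := by
  rcases lt_or_eq_of_le (onorm_nonneg' z) with h' | h'
  · exact h'
  · exact absurd (onorm_eq_zero' h'.symm) h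

lemma onorm_neg' (z : Fin n → ℤ) : onorm (-z) = onorm z := by
  unfold onorm
  exact Finset.sum_congr rfl fun i _ => by simp

lemma onorm_add_le (x y : Fin n → ℤ) : onorm (x + y) ≤ onorm x + onorm y := by
  unfold onorm
  rw [← Finset.sum_add_distrib]
  exact Finset.sum_le_sum fun i _ => by simpa using abs_add_le (x i) (y i)

lemma onorm_two (z : Fin n → ℤ) : onorm (z + z) = 2 * onorm z := by
  unfold onorm
  rw [Finset.mul_sum]
  refine Finset.sum_congr rfl fun i _ => ?_
  simp only [Pi.add_apply, abs_eq_max_neg]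
  omega

lemma posP_neg (z : Fin n → ℤ) : posP (-z) = negP z :=
  funext fun i => by simp [posP, negP]

lemma negP_neg (z : Fin n → ℤ) : negP (-z) = posP z :=
  funext fun i => by simp [posP, negP]

/-- Conformal (sign-compatible coordinatewise) order. -/
def conf (u z : Fin n → ℤ) : Prop := vle (posP u) (posP z) ∧ vle (negP u) (negP z)

lemma conf_refl (z : Fin n → ℤ) : conf z z := ⟨fun _ => le_rfl, fun _ => le_rfl⟩

lemma conf_trans (h1 : conf u v) (h2 : conf v z) : conf u z :=
  ⟨fun i => le_trans (h1.1 i) (h2.1 i), fun i => le_trans (h1.2 i) (h2.2 i)⟩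

lemma conf_neg (h : conf u z) : conf (-u) (-z) := by
  rw [conf, posP_neg, posP_neg, negP_neg, negP_neg]
  exact ⟨h.2, h.1⟩

lemma conf_onorm_sub (h : conf u z) : onorm (z - u) = onorm z - onorm u := by
  unfold onorm
  rw [← Finset.sum_sub_distrib]
  refine Finset.sum_congr rfl fun i _ => ?_
  have h1 := h.1 i; have h2 := h.2 i
  simp only [posP, negP] at h1 h2
  simp only [Pi.sub_apply, abs_eq_max_neg]
  omega

lemma conf_sub (h : conf u z) : conf (z - u) z := by
  refine ⟨fun i => ?_, fun i => ?_⟩ <;>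
  · have h1 := h.1 i; have h2 := h.2 i
    simp only [posP, negP, Pi.sub_apply] at *
    omega

lemma conf_onorm_lt (h : conf u z) (hne : u ≠ z) : onorm u < onorm z := by
  have h1 := conf_onorm_sub h
  have h2 : z - u ≠ 0 := sub_ne_zero.2 (Ne.symm hne)
  have h3 := onorm_pos h2
  omega

/-- The one-sided ("positive") reduction predicate; everything reduces to it. -/
def redP (B : Set (Fin n → ℤ)) (z : Fin n → ℤ) : Prop :=
  ∃ a ∈ B, (vle (posP a) (posP z) ∧ onorm (z - a) < onorm z) ∨
           (vle (negP a) (posP z) ∧ onorm (z + a) < onorm z)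

lemma reduces_iff : reduces B z ↔ redP B z ∨ redP B (-z) := by
  unfold reduces reducesOne redP
  constructor
  · rintro ⟨a, ha, h | h | h | h⟩
    · exact Or.inl ⟨a, ha, Or.inl h⟩
    · exact Or.inl ⟨a, ha, Or.inr h⟩
    · refine Or.inr ⟨a, ha, Or.inl ⟨by rw [posP_neg]; exact h.1, ?_⟩⟩
      rw [show -z - a = -(z + a) by ring, onorm_neg', onorm_neg']
      exact h.2
    · refine Or.inr ⟨a, ha, Or.inr ⟨by rw [posP_neg]; exact h.1, ?_⟩⟩
      rw [show -z + a = -(z - a) by ring, onorm_neg', onorm_neg']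
      exact h.2
  · rintro (⟨a, ha, h | h⟩ | ⟨a, ha, h | h⟩)
    · exact ⟨a, ha, Or.inl h⟩
    · exact ⟨a, ha, Or.inr (Or.inl h)⟩
    · refine ⟨a, ha, Or.inr (Or.inr (Or.inl ⟨by rw [← posP_neg]; exact h.1, ?_⟩))⟩
      have h2 := h.2
      rw [show -z - a = -(z + a) by ring, onorm_neg', onorm_neg'] at h2
      exact h2
    · refine ⟨a, ha, Or.inr (Or.inr (Or.inr ⟨by rw [← posP_neg]; exact h.1, ?_⟩))⟩
      have h2 := h.2
      rw [show -z + a = -(z - a) by ring, onorm_neg', onorm_neg'] at h2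
      exact h2

lemma stronglyReduces_iff : stronglyReduces B z ↔ redP B z ∧ redP B (-z) := by
  unfold stronglyReduces redP
  constructor
  · rintro ⟨h1, a, ha, h | h⟩
    · refine ⟨h1, a, ha, Or.inl ⟨by rw [posP_neg]; exact h.1, ?_⟩⟩
      rw [show -z - a = -(z + a) by ring, onorm_neg', onorm_neg']
      exact h.2
    · refine ⟨h1, a, ha, Or.inr ⟨by rw [posP_neg]; exact h.1, ?_⟩⟩
      rw [show -z + a = -(z - a) by ring, onorm_neg', onorm_neg']
      exact h.2
  · rintro ⟨h1, a, ha, h | h⟩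
    · refine ⟨h1, a, ha, Or.inl ⟨by rw [← posP_neg]; exact h.1, ?_⟩⟩
      have h2 := h.2
      rw [show -z - a = -(z + a) by ring, onorm_neg', onorm_neg'] at h2
      exact h2
    · refine ⟨h1, a, ha, Or.inr ⟨by rw [← posP_neg]; exact h.1, ?_⟩⟩
      have h2 := h.2
      rw [show -z + a = -(z - a) by ring, onorm_neg', onorm_neg'] at h2
      exact h2

lemma redP_of_conf (hgB : g ∈ B) (hg0 : g ≠ 0) (h : conf g z) : redP B z := by
  refine ⟨g, hgB, Or.inl ⟨h.1, ?_⟩⟩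
  rw [conf_onorm_sub h]
  have := onorm_pos hg0
  omega

lemma redP_lift (hx : conf x w) (hne : x ≠ w) (h : redP B (w - x)) : redP B w := by
  have hconf := conf_sub hx
  have t2 : onorm (w - x) = onorm w - onorm x := conf_onorm_sub hx
  obtain ⟨a, ha, h1 | h1⟩ := h
  · refine ⟨a, ha, Or.inl ⟨fun i => le_trans (h1.1 i) (hconf.1 i), ?_⟩⟩
    have t1 : onorm (w - a) ≤ onorm x + onorm (w - x - a) := by
      rw [show w - a = x + (w - x - a) by ring]
      exact onorm_add_le _ _
    have t3 := h1.2
    omega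
  · refine ⟨a, ha, Or.inr ⟨fun i => le_trans (h1.1 i) (hconf.1 i), ?_⟩⟩
    have t1 : onorm (w + a) ≤ onorm x + onorm (w - x + a) := by
      rw [show w + a = x + (w - x + a) by ring]
      exact onorm_add_le _ _
    have t3 := h1.2
    omega

/-- If `z` admits no positive distance decomposition and `B ⊆ K` positively reduces `z`,
then `z ∈ B` or `-z ∈ B`. -/
lemma mem_of_redP (hsub : ∀ u ∈ K, ∀ v ∈ K, u - v ∈ K)
    (hBK : B ⊆ K) (hz : z ∈ Dplus K) (h : redP B z) : z ∈ B ∨ -z ∈ B := by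
  obtain ⟨hzK, hz0, hnd⟩ := hz
  have h0K : (0 : Fin n → ℤ) ∈ K := by simpa using hsub z hzK z hzK
  obtain ⟨a, ha, h1 | h1⟩ := h
  · by_cases hza : a = z
    · exact Or.inl (hza ▸ ha)
    · exfalso
      apply hnd
      have ha0 : a ≠ 0 := by
        rintro rfl
        have h2 := h1.2
        simp at h2
      exact ⟨a, z - a, hBK ha, hsub z hzK a (hBK ha), ha0,
        sub_ne_zero.2 (Ne.symm hza), by ring, h1.1, h1.2⟩
  · by_cases hza : a = -z
    · right
      rw [← hza]; exact ha
    · exfalso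
      apply hnd
      have ha0 : a ≠ 0 := by
        rintro rfl
        have h2 := h1.2
        simp at h2
      have hnaK : -a ∈ K := by simpa using hsub 0 h0K a (hBK ha)
      have hzaK : z + a ∈ K := by
        have := hsub z hzK (-a) hnaK
        simpa [sub_neg_eq_add] using this
      refine ⟨-a, z + a, hnaK, hzaK, neg_ne_zero.2 ha0, ?_, by ring, ?_, h1.2⟩
      · intro hc
        exact hza (eq_neg_of_add_eq_zero_right hc)
      · rw [posP_neg]; exact h1.1

lemma Dminus_neg_mem (hneg : ∀ u ∈ K, -u ∈ K) (hz : z ∈ Dminus K) : -z ∈ Dplus K := by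
  obtain ⟨hzK, hz0, hnd⟩ := hz
  refine ⟨hneg z hzK, neg_ne_zero.2 hz0, ?_⟩
  rintro ⟨u, v, huK, hvK, hu0, hv0, hsum, hle, hlt⟩
  apply hnd
  refine ⟨-u, -v, hneg u huK, hneg v hvK, neg_ne_zero.2 hu0, neg_ne_zero.2 hv0, ?_, ?_, ?_⟩
  · rw [← neg_neg z, hsum]; ring
  · rw [negP_neg]
    rw [posP_neg] at hle
    exact hle
  · rw [onorm_neg']
    rw [onorm_neg'] at hlt
    exact hlt

/-- Conformally minimal nonzero elements of `K` (the "Graver set"). -/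
def grv (K : Set (Fin n → ℤ)) : Set (Fin n → ℤ) :=
  {g | g ∈ K ∧ g ≠ 0 ∧ ∀ h ∈ K, h ≠ 0 → conf h g → h = g}

lemma exists_grv_conf_aux :
    ∀ m : ℕ, ∀ z ∈ K, z ≠ 0 → (onorm z).toNat ≤ m → ∃ g ∈ grv K, conf g z := by
  intro m
  induction m with
  | zero =>
    intro z _ hz0 hm
    have := onorm_pos hz0
    omega
  | succ m ih =>
    intro z hzK hz0 hm
    by_cases hmin : ∀ h ∈ K, h ≠ 0 → conf h z → h = z
    · exact ⟨z, ⟨hzK, hz0, hmin⟩, conf_refl z⟩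
    · push_neg at hmin
      obtain ⟨h, hK, h0, hcf, hne⟩ := hmin
      have hlt := conf_onorm_lt hcf hne
      have hpos := onorm_pos h0
      obtain ⟨g, hg, hgc⟩ := ih h hK h0 (by omega)
      exact ⟨g, hg, conf_trans hgc hcf⟩

lemma exists_grv_conf (hzK : z ∈ K) (hz0 : z ≠ 0) : ∃ g ∈ grv K, conf g z :=
  exists_grv_conf_aux (onorm z).toNat z hzK hz0 le_rfl

/-- Finiteness of the Graver set, via Dickson's lemma. -/
lemma grv_finite (K : Set (Fin n → ℤ)) : (grv K).Finite := by
  classical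
  set f : (Fin n → ℤ) → (Fin n ⊕ Fin n → ℕ) :=
    fun z => Sum.elim (fun i => (posP z i).toNat) (fun i => (negP z i).toNat) with hf
  have hconf : ∀ a ∈ grv K, ∀ b ∈ grv K, f a ≤ f b → a = b := by
    intro a ha b hb hle
    have hcf : conf a b := by
      constructor <;> intro i
      · have h1 := hle (Sum.inl i)
        simp only [hf, Sum.elim_inl] at h1
        have p1 : (0:ℤ) ≤ posP a i := le_max_right _ _
        have p2 : (0:ℤ) ≤ posP b i := le_max_right _ _
        omega
      · have h1 := hle (Sum.inr i)
        simp only [hf, Sum.elim_inr] at h1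
        have p1 : (0:ℤ) ≤ negP a i := le_max_right _ _
        have p2 : (0:ℤ) ≤ negP b i := le_max_right _ _
        omega
    exact hb.2.2 a ha.1 ha.2.1 hcf
  have hanti : IsAntichain (· ≤ ·) (f '' grv K) := by
    rintro x ⟨a, ha, rfl⟩ y ⟨b, hb, rfl⟩ hne hle
    exact hne (congrArg f (hconf a ha b hb hle))
  have hpwo : (f '' grv K).PartiallyWellOrderedOn (· ≤ ·) :=
    Set.isPWO_of_wellQuasiOrderedLE _
  have hfin : (f '' grv K).Finite := hanti.finite_of_partiallyWellOrderedOn hpwo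
  refine Set.Finite.of_finite_image hfin ?_
  intro a ha b hb hab
  exact hconf a ha b hb (le_of_eq hab)

/-- Extraction of a minimal subset satisfying an arbitrary property. -/
lemma exists_minimal_aux {α : Type*} (Φ : Set α → Prop) :
    ∀ m : ℕ, ∀ B : Set α, B.Finite → B.ncard ≤ m → Φ B →
      ∃ B', B' ⊆ B ∧ Φ B' ∧ ∀ C, C ⊂ B' → ¬ Φ C := by
  intro m
  induction m with
  | zero =>
    intro B hB hcard hΦ
    have hB0 : B = ∅ := by
      rw [← Set.ncard_eq_zero hB]
      omega
    refine ⟨B, subset_rfl, hΦ, fun C hC => absurd hC ?_⟩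
    rw [hB0]
    intro hc
    exact hc.ne (Set.subset_empty_iff.1 hc.subset)
  | succ m ih =>
    intro B hB hcard hΦ
    by_cases h : ∀ C, C ⊂ B → ¬ Φ C
    · exact ⟨B, subset_rfl, hΦ, h⟩
    · push_neg at h
      obtain ⟨C, hC, hΦC⟩ := h
      have hCfin : C.Finite := hB.subset hC.subset
      have hlt : C.ncard < B.ncard := Set.ncard_lt_ncard hC hB
      obtain ⟨B', h1, h2, h3⟩ := ih C hCfin (by omega) hΦC
      exact ⟨B', h1.trans hC.subset, h2, h3⟩

lemma exists_minimal {α : Type*} (Φ : Set α → Prop) (B : Set α) (hB : B.Finite) (hΦ : Φ B) :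
    ∃ B', B' ⊆ B ∧ Φ B' ∧ ∀ C, C ⊂ B' → ¬ Φ C :=
  exists_minimal_aux Φ B.ncard B hB le_rfl hΦ

/-- The main patching lemma for `redP` (strong reduction version). -/
lemma patch_redP (hsub : ∀ u ∈ K, ∀ v ∈ K, u - v ∈ K)
    (hz0K : z₀ ∈ K) (hz00 : z₀ ≠ 0)
    (hG : grv K \ {z₀, -z₀} ⊆ B)
    (hp : p ∈ B) (hp1 : vle (posP p) (posP z₀)) (hp2 : onorm (z₀ - p) < onorm z₀)
    (hq : q ∈ B) (hq1 : vle (posP q) (posP (-z₀))) (hq2 : onorm (-z₀ - q) < onorm (-z₀)) :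
    ∀ m : ℕ, ∀ w ∈ K, w ≠ 0 → (onorm w).toNat ≤ m → redP B w := by
  have h0K : (0 : Fin n → ℤ) ∈ K := by simpa using hsub z₀ hz0K z₀ hz0K
  have hnz0K : -z₀ ∈ K := by simpa using hsub 0 h0K z₀ hz0K
  intro m
  induction m with
  | zero =>
    intro w _ hw0 hm
    have := onorm_pos hw0
    omega
  | succ m ih =>
    intro w hwK hw0 hm
    obtain ⟨g, hg, hgc⟩ := exists_grv_conf hwK hw0
    by_cases hg1 : g = z₀
    · by_cases hwz : w = z₀
      · subst hwz
        exact ⟨p, hp, Or.inl ⟨hp1, hp2⟩⟩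
      · have hconf : conf z₀ w := hg1 ▸ hgc
        have hmemK : w - z₀ ∈ K := hsub w hwK z₀ hz0K
        have hne : w - z₀ ≠ 0 := sub_ne_zero.2 hwz
        have heq := conf_onorm_sub hconf
        have hpos := onorm_pos hz00
        exact redP_lift hconf (fun hc => hwz hc.symm) (ih (w - z₀) hmemK hne (by omega))
    · by_cases hg2 : g = -z₀
      · by_cases hwz : w = -z₀
        · subst hwz
          exact ⟨q, hq, Or.inl ⟨hq1, hq2⟩⟩
        · have hconf : conf (-z₀) w := hg2 ▸ hgc
          have hmemK : w - -z₀ ∈ K := hsub w hwK (-z₀) hnz0K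
          have hne : w - -z₀ ≠ 0 := sub_ne_zero.2 hwz
          have heq := conf_onorm_sub hconf
          have hpos := onorm_pos hz00
          have honn := onorm_neg' z₀
          exact redP_lift hconf (fun hc => hwz hc.symm) (ih (w - -z₀) hmemK hne (by omega))
      · refine redP_of_conf (hG ⟨hg, ?_⟩) hg.2.1 hgc
        simp [hg1, hg2]

/-- The main patching lemma for `reduces` (distance-reducing version, single patch element). -/
lemma patch_reduces (hsub : ∀ u ∈ K, ∀ v ∈ K, u - v ∈ K)
    (hz0K : z₀ ∈ K) (hz00 : z₀ ≠ 0)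
    (hG : grv K \ {z₀, -z₀} ⊆ B)
    (hp : p ∈ B) (hp1 : vle (posP p) (posP z₀)) (hp2 : onorm (z₀ - p) < onorm z₀) :
    ∀ m : ℕ, ∀ w ∈ K, w ≠ 0 → (onorm w).toNat ≤ m → reduces B w := by
  have h0K : (0 : Fin n → ℤ) ∈ K := by simpa using hsub z₀ hz0K z₀ hz0K
  have hnz0K : -z₀ ∈ K := by simpa using hsub 0 h0K z₀ hz0K
  intro m
  induction m with
  | zero =>
    intro w _ hw0 hm
    have := onorm_pos hw0
    omega
  | succ m ih =>
    intro w hwK hw0 hm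
    obtain ⟨g, hg, hgc⟩ := exists_grv_conf hwK hw0
    by_cases hg1 : g = z₀
    · have hconf : conf z₀ w := hg1 ▸ hgc
      by_cases hwz : w = z₀
      · subst hwz
        exact reduces_iff.2 (Or.inl ⟨p, hp, Or.inl ⟨hp1, hp2⟩⟩)
      · have hmemK : w - z₀ ∈ K := hsub w hwK z₀ hz0K
        have hne : w - z₀ ≠ 0 := sub_ne_zero.2 hwz
        have heq := conf_onorm_sub hconf
        have hpos := onorm_pos hz00
        have hih := reduces_iff.1 (ih (w - z₀) hmemK hne (by omega))
        rcases hih with h | h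
        · exact reduces_iff.2 (Or.inl (redP_lift hconf (fun hc => hwz hc.symm) h))
        · rw [show -(w - z₀) = -w - -z₀ by ring] at h
          have hconf' : conf (-z₀) (-w) := conf_neg hconf
          have hne' : -z₀ ≠ -w := fun hc => hwz (neg_injective hc).symm
          exact reduces_iff.2 (Or.inr (redP_lift hconf' hne' h))
    · by_cases hg2 : g = -z₀
      · have hconf : conf (-z₀) w := hg2 ▸ hgc
        by_cases hwz : w = -z₀
        · subst hwz
          refine reduces_iff.2 (Or.inr ?_)
          rw [neg_neg]
          exact ⟨p, hp, Or.inl ⟨hp1, hp2⟩⟩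
        · have hmemK : w - -z₀ ∈ K := hsub w hwK (-z₀) hnz0K
          have hne : w - -z₀ ≠ 0 := sub_ne_zero.2 hwz
          have heq := conf_onorm_sub hconf
          have hpos := onorm_pos hz00
          have honn := onorm_neg' z₀
          have hih := reduces_iff.1 (ih (w - -z₀) hmemK hne (by omega))
          rcases hih with h | h
          · exact reduces_iff.2 (Or.inl (redP_lift hconf (fun hc => hwz hc.symm) h))
          · rw [show -(w - -z₀) = -w - z₀ by ring] at h
            have hconf' : conf z₀ (-w) := by
              have := conf_neg hconf
              rwa [neg_neg] at this
            have hne' : z₀ ≠ -w := fun hc => hwz (by rw [hc, neg_neg])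
            exact reduces_iff.2 (Or.inr (redP_lift hconf' hne' h))
      · refine reduces_iff.2 (Or.inl (redP_of_conf (hG ⟨hg, ?_⟩) hg.2.1 hgc))
        simp [hg1, hg2]

lemma posDD_data (h : posDD K z₀) (hz0 : z₀ ≠ 0) :
    ∃ p ∈ K, vle (posP p) (posP z₀) ∧ onorm (z₀ - p) < onorm z₀ ∧ p ≠ z₀ ∧ p ≠ -z₀ := by
  obtain ⟨u, v, huK, hvK, hu0, hv0, hsum, hple, hlt⟩ := h
  have hzv : z₀ - u = v := by rw [hsum]; ring
  refine ⟨u, huK, hple, by rw [hzv]; exact hlt, ?_, ?_⟩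
  · rintro rfl
    rw [sub_self] at hzv
    exact hv0 hzv.symm
  · rintro rfl
    have hv : v = z₀ + z₀ := by rw [← hzv]; ring
    rw [hv, onorm_two] at hlt
    have := onorm_pos hz0
    omega

lemma negDD_data (hneg : ∀ u ∈ K, -u ∈ K) (h : negDD K z₀) (hz0 : z₀ ≠ 0) :
    ∃ q ∈ K, vle (posP q) (posP (-z₀)) ∧ onorm (-z₀ - q) < onorm (-z₀) ∧ q ≠ z₀ ∧ q ≠ -z₀ := by
  obtain ⟨u, v, huK, hvK, hu0, hv0, hsum, hnle, hlt⟩ := h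
  have hzv : z₀ - u = v := by rw [hsum]; ring
  refine ⟨-u, hneg u huK, ?_, ?_, ?_, ?_⟩
  · rw [posP_neg, posP_neg]
    exact hnle
  · rw [show -z₀ - -u = -(z₀ - u) by ring, onorm_neg', onorm_neg', hzv]
    exact hlt
  · intro h'
    have hu : u = -z₀ := by rw [← h', neg_neg]
    have hv : v = z₀ + z₀ := by rw [← hzv, hu]; ring
    rw [hv, onorm_two] at hlt
    have := onorm_pos hz0
    omega
  · intro h'
    have hu : u = z₀ := neg_injective h'
    have hv : v = 0 := by rw [← hzv, hu]; ring
    exact hv0 hv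

end Statement16Aux

/-- `D(A)` (resp. `D^w(A)`) is the intersection of `B ∪ -B` over all
minimally (strongly) distance reducing sets `B`. -/
theorem dist_irreducibles_eq_intersection {d n : ℕ} (A : Matrix (Fin d) (Fin n) ℤ)
    (hker : ∀ u ∈ kerM A, (∀ i, 0 ≤ u i) → u = 0) :
    (Dboth (kerM A) = ⋂ B ∈ {B : Set (Fin n → ℤ) | minDistRed (kerM A) B}, (B ∪ -B)) ∧
    (Dweak (kerM A) = ⋂ B ∈ {B : Set (Fin n → ℤ) | minStrongDistRed (kerM A) B}, (B ∪ -B)) := by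
  classical
  set K : Set (Fin n → ℤ) := kerM A with hK
  have hsub : ∀ u ∈ K, ∀ v ∈ K, u - v ∈ K := by
    intro u hu v hv
    simp only [hK, kerM, Set.mem_setOf_eq] at hu hv ⊢
    rw [Matrix.mulVec_sub, hu, hv, sub_self]
  have h0K : (0 : Fin n → ℤ) ∈ K := by
    simp only [hK, kerM, Set.mem_setOf_eq, Matrix.mulVec_zero]
  have hneg : ∀ u ∈ K, -u ∈ K := fun u hu => by simpa using hsub 0 h0K u hu
  have hGsub : grv K ⊆ K := fun g hg => hg.1
  have hGfin := grv_finite K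
  have hGdr : distanceReducing K (grv K) := by
    intro w hwK hw0
    obtain ⟨g, hg, hgc⟩ := exists_grv_conf hwK hw0
    exact reduces_iff.2 (Or.inl (redP_of_conf hg hg.2.1 hgc))
  have hGsdr : stronglyDistanceReducing K (grv K) := by
    intro w hwK hw0
    refine stronglyReduces_iff.2 ⟨?_, ?_⟩
    · obtain ⟨g, hg, hgc⟩ := exists_grv_conf hwK hw0
      exact redP_of_conf hg hg.2.1 hgc
    · obtain ⟨g, hg, hgc⟩ := exists_grv_conf (hneg w hwK) (neg_ne_zero.2 hw0)
      exact redP_of_conf hg hg.2.1 hgc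
  constructor
  · -- the `Dboth` statement
    apply Set.eq_of_subset_of_subset
    · intro z hz
      refine Set.mem_iInter₂.2 fun B hB => ?_
      obtain ⟨hBK, hBdr, -⟩ := hB
      rcases reduces_iff.1 (hBdr z hz.1.1 hz.1.2.1) with h | h
      · rcases mem_of_redP hsub hBK hz.1 h with h' | h'
        · exact Or.inl h'
        · exact Or.inr (Set.mem_neg.2 h')
      · rcases mem_of_redP hsub hBK (Dminus_neg_mem hneg hz.2) h with h' | h'
        · exact Or.inr (Set.mem_neg.2 h')
        · rw [neg_neg] at h'
          exact Or.inl h'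
    · intro z hz
      have hz' := Set.mem_iInter₂.1 hz
      obtain ⟨B₀, hB₀sub, hB₀dr, hB₀min⟩ :=
        exists_minimal (distanceReducing K) (grv K) hGfin hGdr
      have hmem := hz' B₀ ⟨hB₀sub.trans hGsub, hB₀dr, hB₀min⟩
      have hzK : z ∈ K := by
        rcases hmem with h | h
        · exact hGsub (hB₀sub h)
        · have := hneg _ (hGsub (hB₀sub (Set.mem_neg.1 h)))
          simpa using this
      have hz0 : z ≠ 0 := by
        rcases hmem with h | h
        · exact (hB₀sub h).2.1
        · intro hc
          apply (hB₀sub (Set.mem_neg.1 h)).2.1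
          rw [hc, neg_zero]
      have hnp : ¬ posDD K z := by
        intro hdd
        obtain ⟨p, hpK, hp1, hp2, hpz, hpz'⟩ := posDD_data hdd hz0
        set B₁ : Set (Fin n → ℤ) := (grv K \ {z, -z}) ∪ {p} with hB₁
        have hB₁fin : B₁.Finite :=
          (hGfin.subset Set.diff_subset).union (Set.finite_singleton p)
        have hB₁K : B₁ ⊆ K := by
          rintro x (hx | hx)
          · exact hGsub hx.1
          · rw [Set.mem_singleton_iff.1 hx]
            exact hpK
        have hB₁dr : distanceReducing K B₁ := by
          intro w hwK hw0
          exact patch_reduces hsub hzK hz0 Set.subset_union_left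
            (Set.mem_union_right _ (Set.mem_singleton p)) hp1 hp2 (onorm w).toNat w hwK hw0 le_rfl
        obtain ⟨B₁', hs1, hs2, hs3⟩ := exists_minimal (distanceReducing K) B₁ hB₁fin hB₁dr
        have hmem' := hz' B₁' ⟨hs1.trans hB₁K, hs2, hs3⟩
        have hzn1 : z ∉ B₁ := by
          rintro (hx | hx)
          · exact hx.2 (Set.mem_insert _ _)
          · exact hpz (Set.mem_singleton_iff.1 hx).symm
        have hzn2 : -z ∉ B₁ := by
          rintro (hx | hx)
          · exact hx.2 (Set.mem_insert_of_mem _ rfl)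
          · exact hpz' (Set.mem_singleton_iff.1 hx).symm
        rcases hmem' with h | h
        · exact hzn1 (hs1 h)
        · exact hzn2 (hs1 (Set.mem_neg.1 h))
      have hnn : ¬ negDD K z := by
        intro hdd
        obtain ⟨q, hqK, hq1, hq2, hqz, hqz'⟩ := negDD_data hneg hdd hz0
        set B₂ : Set (Fin n → ℤ) := (grv K \ {-z, -(-z)}) ∪ {q} with hB₂
        have hB₂fin : B₂.Finite :=
          (hGfin.subset Set.diff_subset).union (Set.finite_singleton q)
        have hB₂K : B₂ ⊆ K := by
          rintro x (hx | hx)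
          · exact hGsub hx.1
          · rw [Set.mem_singleton_iff.1 hx]
            exact hqK
        have hB₂dr : distanceReducing K B₂ := by
          intro w hwK hw0
          exact patch_reduces hsub (hneg z hzK) (neg_ne_zero.2 hz0) Set.subset_union_left
            (Set.mem_union_right _ (Set.mem_singleton q)) hq1 hq2 (onorm w).toNat w hwK hw0 le_rfl
        obtain ⟨B₂', hs1, hs2, hs3⟩ := exists_minimal (distanceReducing K) B₂ hB₂fin hB₂dr
        have hmem' := hz' B₂' ⟨hs1.trans hB₂K, hs2, hs3⟩
        have hzn1 : z ∉ B₂ := by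
          rintro (hx | hx)
          · exact hx.2 (Set.mem_insert_of_mem _ (Set.mem_singleton_iff.2 (neg_neg z).symm))
          · exact hqz (Set.mem_singleton_iff.1 hx).symm
        have hzn2 : -z ∉ B₂ := by
          rintro (hx | hx)
          · exact hx.2 (Set.mem_insert _ _)
          · exact hqz' (Set.mem_singleton_iff.1 hx).symm
        rcases hmem' with h | h
        · exact hzn1 (hs1 h)
        · exact hzn2 (hs1 (Set.mem_neg.1 h))
      exact ⟨⟨hzK, hz0, hnp⟩, hzK, hz0, hnn⟩
  · -- the `Dweak` statement
    apply Set.eq_of_subset_of_subset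
    · intro z hz
      refine Set.mem_iInter₂.2 fun B hB => ?_
      obtain ⟨hBK, hBsdr, -⟩ := hB
      rcases hz with hz | hz
      · have h := (stronglyReduces_iff.1 (hBsdr z hz.1 hz.2.1)).1
        rcases mem_of_redP hsub hBK hz h with h' | h'
        · exact Or.inl h'
        · exact Or.inr (Set.mem_neg.2 h')
      · have h := (stronglyReduces_iff.1 (hBsdr z hz.1 hz.2.1)).2
        rcases mem_of_redP hsub hBK (Dminus_neg_mem hneg hz) h with h' | h'
        · exact Or.inr (Set.mem_neg.2 h')
        · rw [neg_neg] at h'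
          exact Or.inl h'
    · intro z hz
      have hz' := Set.mem_iInter₂.1 hz
      obtain ⟨B₀, hB₀sub, hB₀sdr, hB₀min⟩ :=
        exists_minimal (stronglyDistanceReducing K) (grv K) hGfin hGsdr
      have hmem := hz' B₀ ⟨hB₀sub.trans hGsub, hB₀sdr, hB₀min⟩
      have hzK : z ∈ K := by
        rcases hmem with h | h
        · exact hGsub (hB₀sub h)
        · have := hneg _ (hGsub (hB₀sub (Set.mem_neg.1 h)))
          simpa using this
      have hz0 : z ≠ 0 := by
        rcases hmem with h | h
        · exact (hB₀sub h).2.1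
        · intro hc
          apply (hB₀sub (Set.mem_neg.1 h)).2.1
          rw [hc, neg_zero]
      by_contra hcon
      have h1 : ¬ z ∈ Dplus K := fun h => hcon (Or.inl h)
      have h2 : ¬ z ∈ Dminus K := fun h => hcon (Or.inr h)
      have hpdd : posDD K z := by
        by_contra hnp
        exact h1 ⟨hzK, hz0, hnp⟩
      have hndd : negDD K z := by
        by_contra hnn
        exact h2 ⟨hzK, hz0, hnn⟩
      obtain ⟨p, hpK, hp1, hp2, hpz, hpz'⟩ := posDD_data hpdd hz0
      obtain ⟨q, hqK, hq1, hq2, hqz, hqz'⟩ := negDD_data hneg hndd hz0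
      set B₃ : Set (Fin n → ℤ) := (grv K \ {z, -z}) ∪ {p, q} with hB₃
      have hB₃fin : B₃.Finite :=
        (hGfin.subset Set.diff_subset).union ((Set.finite_singleton q).insert p)
      have hB₃K : B₃ ⊆ K := by
        rintro x (hx | hx)
        · exact hGsub hx.1
        · rcases Set.mem_insert_iff.1 hx with hx | hx
          · rw [hx]; exact hpK
          · rw [Set.mem_singleton_iff.1 hx]; exact hqK
      have hpB : p ∈ B₃ := Set.mem_union_right _ (Set.mem_insert p {q})
      have hqB : q ∈ B₃ := Set.mem_union_right _ (Set.mem_insert_of_mem _ rfl)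
      have hB₃sdr : stronglyDistanceReducing K B₃ := by
        intro w hwK hw0
        refine stronglyReduces_iff.2 ⟨?_, ?_⟩
        · exact patch_redP hsub hzK hz0 Set.subset_union_left hpB hp1 hp2 hqB hq1 hq2
            (onorm w).toNat w hwK hw0 le_rfl
        · exact patch_redP hsub hzK hz0 Set.subset_union_left hpB hp1 hp2 hqB hq1 hq2
            (onorm (-w)).toNat (-w) (hneg w hwK) (neg_ne_zero.2 hw0) le_rfl
      obtain ⟨B₃', hs1, hs2, hs3⟩ :=
        exists_minimal (stronglyDistanceReducing K) B₃ hB₃fin hB₃sdr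
      have hmem' := hz' B₃' ⟨hs1.trans hB₃K, hs2, hs3⟩
      have hzn1 : z ∉ B₃ := by
        rintro (hx | hx)
        · exact hx.2 (Set.mem_insert _ _)
        · rcases Set.mem_insert_iff.1 hx with hx | hx
          · exact hpz hx.symm
          · exact hqz (Set.mem_singleton_iff.1 hx).symm
      have hzn2 : -z ∉ B₃ := by
        rintro (hx | hx)
        · exact hx.2 (Set.mem_insert_of_mem _ rfl)
        · rcases Set.mem_insert_iff.1 hx with hx | hx
          · exact hpz' hx.symm
          · exact hqz' (Set.mem_singleton_iff.1 hx).symm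
      rcases hmem' with h | h
      · exact hzn1 (hs1 h)
      · exact hzn2 (hs1 (Set.mem_neg.1 h))


end DistRed
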